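/- Let A be a Banach *-algebra with an approximate identity, and let f be a continuous positive form on A. Then f extends to a unique positive form f̃ on the unital extension à = ℂ ⊕ A of A such that f̃(1) = ‖f‖, where ‖f‖ = sup_{‖a‖=1} |f(a)|. -/

import Mathlib

/-!
`⟪a, b⟫ = f (star a * b)` is a semi-inner product on `A`, so Cauchy–Schwarz holds for it. Testing it
against an approximate unit `u i` (with `‖u i‖ ≤ 1`) gives `f (star a) = conj (f a)` and
`|f a|² ≤ ‖f‖ f (star a * a)`. The latter is exactly the discriminant condition that makes
`F (star x * x) = ‖f‖ |λ|² + 2 Re (conj λ f a) + f (star a * a)` nonnegative for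
`F (λ + a) = ‖f‖ λ + f a`. A linear form on `ℂ ⊕ A` is determined by its value at `1` and on `A`.
-/

open scoped ComplexOrder
open Filter Topology

section PositiveForm

variable {A : Type*} [NonUnitalRing A] [StarRing A] [Module ℂ A] [IsScalarTower ℂ A A]
  [SMulCommClass ℂ A A] [StarModule ℂ A] {F : Type*} [FunLike F A ℂ] [LinearMapClass F ℂ A ℂ]
  {f : F}

-- Polarization: the imaginary parts of `f` at `star c * c` vanish for `c = a + b` and `a + I • b`.
lemma map_star_mul_eq_conj (hf : ∀ a, 0 ≤ f (star a * a)) (a b : A) :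
    f (star b * a) = starRingEnd ℂ (f (star a * b)) := by
  have im_cross : ∀ b, (f (star a * b) + f (star b * a)).im = 0 := fun b ↦ by
    have hab := (Complex.nonneg_iff.mp (hf (a + b))).2
    have ha := (Complex.nonneg_iff.mp (hf a)).2
    have hb := (Complex.nonneg_iff.mp (hf b)).2
    simp only [star_add, add_mul, mul_add, map_add, Complex.add_im] at hab ⊢
    linarith
  have h := im_cross b
  have hI := im_cross (Complex.I • b)
  simp only [mul_smul_comm, star_smul, smul_mul_assoc, map_smul, smul_eq_mul, Complex.star_def,
    Complex.conj_I, Complex.add_im, Complex.mul_im, Complex.neg_re, Complex.neg_im,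
    Complex.I_re, Complex.I_im] at h hI
  apply Complex.ext <;> simp only [Complex.conj_re, Complex.conj_im] <;> linarith

abbrev innerCoreOfPositive (hf : ∀ a, 0 ≤ f (star a * a)) : PreInnerProductSpace.Core ℂ A where
  inner a b := f (star a * b)
  conj_inner_symm a b := (map_star_mul_eq_conj hf b a).symm
  re_inner_nonneg a := (Complex.nonneg_iff.mp (hf a)).1
  add_left a b c := by simp only [star_add, add_mul, map_add]
  smul_left a b r := by simp only [star_smul, smul_mul_assoc, map_smul, smul_eq_mul]; rfl

lemma norm_map_star_mul_sq_le (hf : ∀ a, 0 ≤ f (star a * a)) (a b : A) :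
    ‖f (star a * b)‖ ^ 2 ≤ (f (star a * a)).re * (f (star b * b)).re := by
  let := innerCoreOfPositive hf
  have h := InnerProductSpace.Core.inner_mul_inner_self_le (𝕜 := ℂ) a b
  rwa [InnerProductSpace.Core.norm_inner_symm b a, ← sq] at h

end PositiveForm

lemma tendsto_star_mul_of_tendsto_mul {A ι : Type*} [Mul A] [StarMul A] [TopologicalSpace A]
    [ContinuousStar A] {l : Filter ι} {u : ι → A} (hu : ∀ a, Tendsto (fun i ↦ a * u i) l (𝓝 a))
    (a : A) : Tendsto (fun i ↦ star (u i) * a) l (𝓝 a) := by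
  simpa using (hu (star a)).star

section ApproximateUnit

variable {A : Type*} [NonUnitalNormedRing A] [StarRing A] [NormedStarGroup A] [NormedSpace ℂ A]
  [IsScalarTower ℂ A A] [SMulCommClass ℂ A A] [StarModule ℂ A]
  {ι : Type*} {l : Filter ι} [l.NeBot] {u : ι → A}
  {f : A →L[ℂ] ℂ}

lemma map_star_of_tendsto_mul (hu : ∀ a, Tendsto (fun i ↦ a * u i) l (𝓝 a))
    (hf : ∀ a, 0 ≤ f (star a * a)) (a : A) : f (star a) = starRingEnd ℂ (f a) := by
  have h₁ : Tendsto (fun i ↦ f (star a * u i)) l (𝓝 (f (star a))) :=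
    (f.continuous.tendsto _).comp (hu (star a))
  have h₂ : Tendsto (fun i ↦ f (star a * u i)) l (𝓝 (starRingEnd ℂ (f a))) :=
    ((Complex.continuous_conj.tendsto _).comp ((f.continuous.tendsto a).comp
      (tendsto_star_mul_of_tendsto_mul hu a))).congr fun i ↦ (map_star_mul_eq_conj hf (u i) a).symm
  exact tendsto_nhds_unique h₁ h₂

lemma norm_sq_le_opNorm_mul_re_map_star_mul_self (hu : ∀ a, Tendsto (fun i ↦ a * u i) l (𝓝 a))
    (hu_norm : ∀ i, ‖u i‖ ≤ 1) (hf : ∀ a, 0 ≤ f (star a * a)) (a : A) :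
    ‖f a‖ ^ 2 ≤ ‖f‖ * (f (star a * a)).re := by
  have hlim : Tendsto (fun i ↦ ‖f (star (u i) * a)‖ ^ 2) l (𝓝 (‖f a‖ ^ 2)) :=
    (((f.continuous.tendsto a).comp (tendsto_star_mul_of_tendsto_mul hu a)).norm).pow 2
  refine le_of_tendsto hlim (Eventually.of_forall fun i ↦ ?_)
  have hu_sq : ‖star (u i) * u i‖ ≤ 1 := (norm_mul_le _ _).trans <| by
    rw [norm_star]; exact mul_le_one₀ (hu_norm i) (norm_nonneg _) (hu_norm i)
  have hf_u : (f (star (u i) * u i)).re ≤ ‖f‖ :=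
    calc (f (star (u i) * u i)).re ≤ ‖f (star (u i) * u i)‖ := Complex.re_le_norm _
      _ ≤ ‖f‖ * ‖star (u i) * u i‖ := f.le_opNorm _
      _ ≤ ‖f‖ := mul_le_of_le_one_right (norm_nonneg f) hu_sq
  calc ‖f (star (u i) * a)‖ ^ 2 ≤ (f (star (u i) * u i)).re * (f (star a * a)).re :=
        norm_map_star_mul_sq_le hf (u i) a
    _ ≤ ‖f‖ * (f (star a * a)).re := by
        gcongr
        exact (Complex.nonneg_iff.mp (hf a)).1

end ApproximateUnit

lemma two_mul_mul_le_of_sq_le_mul {N p w : ℝ} (hN : 0 ≤ N) (hw : 0 ≤ w) (h : p ^ 2 ≤ N * w)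
    (t : ℝ) : 2 * t * p ≤ N * t ^ 2 + w := by
  nlinarith [sq_nonneg (N * t - p), sq_nonneg t, mul_nonneg hN (sq_nonneg t),
    sq_nonneg (N * t ^ 2 - w)]

namespace Unitization

lemma linearMap_ext_of_apply_one {R A N : Type*} [CommSemiring R] [AddCommMonoid A] [Module R A]
    [AddCommMonoid N] [Module R N] {G H : Unitization R A →ₗ[R] N} (h1 : G 1 = H 1)
    (hA : ∀ a : A, G a = H a) : G = H :=
  linearMap_ext (fun r ↦ by
    rw [← mul_one r, ← smul_eq_mul, inl_smul, inl_one, map_smul, map_smul, h1]) hA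

def extendLinearMap {R A : Type*} [CommSemiring R] [AddCommMonoid A] [Module R A] (c : R)
    (f : A →ₗ[R] R) : Unitization R A →ₗ[R] R :=
  (c • LinearMap.fst R R A + f ∘ₗ LinearMap.snd R R A) ∘ₗ (linearEquiv R R A).toLinearMap

@[simp]
lemma extendLinearMap_apply {R A : Type*} [CommSemiring R] [AddCommMonoid A] [Module R A] (c : R)
    (f : A →ₗ[R] R) (x : Unitization R A) :
    extendLinearMap c f x = c * x.fst + f x.snd := rfl

lemma extendLinearMap_star_mul_self_nonneg {A : Type*} [NonUnitalRing A] [StarRing A]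
    [Module ℂ A] {f : A →ₗ[ℂ] ℂ} {N : ℝ} (hN : 0 ≤ N)
    (hf : ∀ a, 0 ≤ f (star a * a)) (hf_star : ∀ a, f (star a) = starRingEnd ℂ (f a))
    (hf_bound : ∀ a, ‖f a‖ ^ 2 ≤ N * (f (star a * a)).re) (x : Unitization ℂ A) :
    0 ≤ extendLinearMap (N : ℂ) f (star x * x) := by
  set l := x.fst
  set a := x.snd
  set z := starRingEnd ℂ l * f a
  obtain ⟨hw_re, hw_im⟩ := Complex.nonneg_iff.mp (hf a)
  have hw : f (star a * a) = ((f (star a * a)).re : ℂ) := Complex.ext rfl hw_im.symm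
  have hx : extendLinearMap (N : ℂ) f (star x * x) =
      N * (starRingEnd ℂ l * l) + (z + starRingEnd ℂ z) + f (star a * a) := by
    simp only [extendLinearMap_apply, fst_mul, snd_mul, fst_star, snd_star, map_add, map_smul,
      smul_eq_mul, hf_star, map_mul, Complex.conj_conj, Complex.star_def, z]
    ring
  have hz : -(‖l‖ * ‖f a‖) ≤ z.re := by
    simpa [z] using neg_le_of_abs_le (Complex.abs_re_le_norm z)
  have hquad : 2 * ‖l‖ * ‖f a‖ ≤ N * ‖l‖ ^ 2 + (f (star a * a)).re :=
    two_mul_mul_le_of_sq_le_mul hN hw_re (hf_bound a) _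
  rw [hx, Complex.conj_mul', Complex.add_conj, hw]
  exact_mod_cast (by linarith : 0 ≤ N * ‖l‖ ^ 2 + 2 * z.re + (f (star a * a)).re)

end Unitization

theorem positive_form_extends_to_unitization_general
    {A : Type*} [NormedRing A] [StarRing A] [NormedStarGroup A]
    [NormedAlgebra ℂ A] [StarModule ℂ A]
    {ι : Type*} [Nonempty ι] [Preorder ι] [IsDirected ι (· ≤ ·)]
    (u : ι → A) (hu_norm : ∀ i, ‖u i‖ < 1)
    (hu_right : ∀ a : A, Filter.Tendsto (fun i => ‖a * u i - a‖) Filter.atTop (nhds 0))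
    (f : A →L[ℂ] ℂ) (hpos : ∀ a, 0 ≤ f (star a * a)) :
    ∃! F : Unitization ℂ A →ₗ[ℂ] ℂ,
      (∀ a : A, F (Unitization.inr a) = f a) ∧
      (∀ x, 0 ≤ F (star x * x)) ∧
      F 1 = (‖f‖ : ℂ) := by
  have hu : ∀ a, Tendsto (fun i ↦ a * u i) atTop (𝓝 a) := fun a ↦
    tendsto_iff_norm_sub_tendsto_zero.mpr (hu_right a)
  have hf_star := map_star_of_tendsto_mul hu hpos
  have hf_bound := norm_sq_le_opNorm_mul_re_map_star_mul_self hu (fun i ↦ (hu_norm i).le) hpos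
  refine ⟨Unitization.extendLinearMap (‖f‖ : ℂ) f, ⟨fun a ↦ by simp,
    Unitization.extendLinearMap_star_mul_self_nonneg (norm_nonneg f) hpos hf_star hf_bound,
    by simp⟩, ?_⟩
  rintro G ⟨hG, -, hG1⟩
  exact Unitization.linearMap_ext_of_apply_one (by simp [hG1]) fun a ↦ by simp [hG]

/-- Let `A` be a Banach `*`-algebra with an approximate identity
(a net `u : ι → A` over a directed index set with `‖u i‖ < 1` and
`‖u i * a - a‖ → 0`, `‖a * u i - a‖ → 0` for every `a`), and let `f` be a continuous
positive form on `A`.  Then `f` extends to a unique positive form `F` on the unital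
extension `ℂ ⊕ A` of `A` such that `F 1 = ‖f‖`. -/
theorem positive_form_extends_to_unitization
    {A : Type*} [NormedRing A] [StarRing A] [NormedStarGroup A]
    [NormedAlgebra ℂ A] [StarModule ℂ A] [CompleteSpace A]
    {ι : Type*} [Nonempty ι] [Preorder ι] [IsDirected ι (· ≤ ·)]
    (u : ι → A) (hu_norm : ∀ i, ‖u i‖ < 1)
    (hu_left : ∀ a : A, Filter.Tendsto (fun i => ‖u i * a - a‖) Filter.atTop (nhds 0))
    (hu_right : ∀ a : A, Filter.Tendsto (fun i => ‖a * u i - a‖) Filter.atTop (nhds 0))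
    (f : A →L[ℂ] ℂ) (hpos : ∀ a, 0 ≤ f (star a * a)) :
    ∃! F : Unitization ℂ A →ₗ[ℂ] ℂ,
      (∀ a : A, F (Unitization.inr a) = f a) ∧
      (∀ x, 0 ≤ F (star x * x)) ∧
      F 1 = (‖f‖ : ℂ) :=
  positive_form_extends_to_unitization_general u hu_norm hu_right f hpos
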